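/- Let x₀ ∈ ℝ^{k₀} be fixed, let h_i : ℝ^{k_{i−1}} × ℝ^m → ℝ^{k_i} (i = 1,…,n) and f : ℝ^{k₁} × ⋯ × ℝ^{k_n} → ℝ be differentiable, and define x_i(θ) = h_i(x_{i−1}(θ), θ) recursively. Define row vectors λ_i(θ) by the adjoint equations λ_n^T = ∂f/∂x_n and λ_{i−1}^T = ∂f/∂x_{i−1} + λ_i^T ∂h_i/∂x_{i−1} for i = n,…,2, where the partial derivatives of f are evaluated at (x₁(θ),…,x_n(θ)) and those of h_i at (x_{i−1}(θ), θ). Then F(θ) := f(x₁(θ),…,x_n(θ)) is differentiable and its gradient satisfies dF/dθ = Σ_{i=1}^n λ_i(θ)^T · (∂h_i/∂θ)(x_{i−1}(θ), θ). -/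

import Mathlib

/-!
Forward-mode differentiation gives `dF/dθ = ∑ⱼ ∂ⱼf ∘ Dⱼ₊₁`, where the tangents `Dᵢ = dxᵢ/dθ`
satisfy `D₀ = 0` and `Dᵢ₊₁ = ∂ₓhᵢ ∘ Dᵢ + ∂_θhᵢ`. The adjoint equations are what makes
`∑_{j ≥ i} ∂ⱼf ∘ Dⱼ₊₁ = λᵢ ∘ Dᵢ₊₁ + ∑_{j > i} λⱼ ∘ ∂_θhⱼ` go through by downward induction on `i`;
at `i = 0` the first term is `λ₀ ∘ ∂_θh₀`, since `D₁ = ∂_θh₀`.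
-/

open scoped BigOperators

noncomputable section

open ContinuousLinearMap Finset

section

variable {𝕜 : Type*} [NontriviallyNormedField 𝕜] {W G : Type*}
  [NormedAddCommGroup W] [NormedSpace 𝕜 W] [NormedAddCommGroup G] [NormedSpace 𝕜 G]

section Partials

variable {ι : Type*} [Fintype ι] [DecidableEq ι] {F : ι → Type*}
  [∀ j, NormedAddCommGroup (F j)] [∀ j, NormedSpace 𝕜 (F j)]

theorem fderiv_comp_update {f : (∀ j, F j) → G} {y : ∀ j, F j} (hf : DifferentiableAt 𝕜 f y)
    (j : ι) :
    fderiv 𝕜 (fun v => f (Function.update y j v)) (y j) = fderiv 𝕜 f y ∘L single 𝕜 F j := by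
  have hsingle : ContinuousLinearMap.pi (Pi.single j (.id 𝕜 (F j))) = single 𝕜 F j := by
    ext v i
    by_cases hij : i = j
    · subst hij; simp
    · simp [hij]
  have hcomp := (Function.update_eq_self j y ▸ hf).hasFDerivAt.comp (y j)
    (hasFDerivAt_update (𝕜 := 𝕜) y (y j))
  rw [Function.update_eq_self, hsingle] at hcomp
  exact hcomp.fderiv

theorem comp_pi_eq_sum_comp_single (L : (∀ j, F j) →L[𝕜] G) (D : ∀ j, W →L[𝕜] F j) :
    L ∘L ContinuousLinearMap.pi D = ∑ j, (L ∘L single 𝕜 F j) ∘L D j := by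
  ext w
  simp [← map_sum, Finset.univ_sum_single]

theorem hasFDerivAt_comp_pi_of_partials {f : (∀ j, F j) → G} {X : W → ∀ j, F j}
    {D : ∀ j, W →L[𝕜] F j} {θ : W} (hf : DifferentiableAt 𝕜 f (X θ))
    (hX : ∀ j, HasFDerivAt (fun θ' => X θ' j) (D j) θ) :
    HasFDerivAt (fun θ' => f (X θ'))
      (∑ j, fderiv 𝕜 (fun v => f (Function.update (X θ) j v)) (X θ j) ∘L D j) θ := by
  simp_rw [fderiv_comp_update hf, ← comp_pi_eq_sum_comp_single]
  exact hf.hasFDerivAt.comp θ (hasFDerivAt_pi.2 hX)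

end Partials

section Recursion

variable {E : ℕ → Type*} [∀ i, NormedAddCommGroup (E i)] [∀ i, NormedSpace 𝕜 (E i)]

variable (𝕜) in
def stateTangent (h : ∀ i, E i × W → E (i + 1)) (x : ∀ i, W → E i) (θ : W) :
    ∀ i, W →L[𝕜] E i
  | 0 => 0
  | i + 1 => (fderiv 𝕜 (h i) (x i θ, θ) ∘L inl 𝕜 _ _) ∘L stateTangent h x θ i
      + fderiv 𝕜 (h i) (x i θ, θ) ∘L inr 𝕜 _ _

theorem hasFDerivAt_stateTangent {h : ∀ i, E i × W → E (i + 1)} {x : ∀ i, W → E i} {θ : W}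
    {x₀ : E 0} (hx0 : ∀ θ', x 0 θ' = x₀) (hxs : ∀ i θ', x (i + 1) θ' = h i (x i θ', θ'))
    (hh : ∀ i, DifferentiableAt 𝕜 (h i) (x i θ, θ)) (i : ℕ) :
    HasFDerivAt (x i) (stateTangent 𝕜 h x θ i) θ := by
  induction i with
  | zero =>
    rw [funext hx0]
    exact hasFDerivAt_const (𝕜 := 𝕜) x₀ θ
  | succ i ih =>
    have hcomp : HasFDerivAt (fun θ' => h i (x i θ', θ')) _ θ :=
      (hh i).hasFDerivAt.comp (f := fun θ' => (x i θ', θ')) θ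
        (ih.prodMk (hasFDerivAt_id θ))
    have hsplit : fderiv 𝕜 (h i) (x i θ, θ) ∘L (stateTangent 𝕜 h x θ i).prod (.id 𝕜 W)
        = stateTangent 𝕜 h x θ (i + 1) := by
      ext w
      simp [stateTangent, ← map_add]
    rw [funext (hxs i), ← hsplit]
    exact hcomp

theorem sum_comp_tangent_eq_sum_adjoint_comp {n : ℕ} (A : ∀ i, E i →L[𝕜] E (i + 1))
    (B : ∀ i, W →L[𝕜] E (i + 1)) (D : ∀ i, W →L[𝕜] E i) (hD0 : D 0 = 0)
    (hD : ∀ i, D (i + 1) = A i ∘L D i + B i) (P lam : ∀ j, E (j + 1) →L[𝕜] G)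
    (hlam_top : lam (n - 1) = P (n - 1))
    (hlam_rec : ∀ j, j + 1 < n → lam j = P j + lam (j + 1) ∘L A (j + 1)) :
    ∑ j ∈ range n, P j ∘L D (j + 1) = ∑ j ∈ range n, lam j ∘L B j := by
  rcases Nat.eq_zero_or_pos n with rfl | hn
  · simp
  have htail : ∀ i ≤ n - 1, ∑ j ∈ Ico i n, P j ∘L D (j + 1)
      = lam i ∘L D (i + 1) + ∑ j ∈ Ico (i + 1) n, lam j ∘L B j := by
    intro i hi
    induction hi using Nat.decreasingInduction with
    | self =>
      rw [Nat.Ico_pred_singleton hn, sum_singleton, Ico_eq_empty_of_le (by omega), sum_empty,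
        add_zero, hlam_top]
    | of_succ i hi ih =>
      rw [sum_eq_sum_Ico_succ_bot (by omega), ih,
        sum_eq_sum_Ico_succ_bot (by omega : i + 1 < n) fun j => lam j ∘L B j, hD (i + 1),
        hlam_rec i (by omega), add_comp, comp_add, comp_assoc]
      abel
  rw [range_eq_Ico, htail 0 (Nat.zero_le _), hD 0, hD0, comp_zero, zero_add (B 0),
    ← sum_eq_sum_Ico_succ_bot hn fun j => lam j ∘L B j]

end Recursion

end

/-- Indices are shifted by one against the paper: `h i` is `hᵢ₊₁` and `lam j` is `λⱼ₊₁`. -/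
theorem stmt_0
    (n m : ℕ) (hn : 1 ≤ n) (k : ℕ → ℕ)
    (x₀ : EuclideanSpace ℝ (Fin (k 0)))
    (h : (i : ℕ) → EuclideanSpace ℝ (Fin (k i)) × EuclideanSpace ℝ (Fin m) →
      EuclideanSpace ℝ (Fin (k (i + 1))))
    (f : ((j : Fin n) → EuclideanSpace ℝ (Fin (k (j.1 + 1)))) → ℝ)
    (hh : ∀ i, Differentiable ℝ (h i))
    (hf : Differentiable ℝ f)
    (x : (i : ℕ) → EuclideanSpace ℝ (Fin m) → EuclideanSpace ℝ (Fin (k i)))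
    (hx0 : ∀ θ, x 0 θ = x₀)
    (hxs : ∀ i θ, x (i + 1) θ = h i (x i θ, θ))
    (X : EuclideanSpace ℝ (Fin m) → (j : Fin n) → EuclideanSpace ℝ (Fin (k (j.1 + 1))))
    (hX : ∀ θ j, X θ j = x (j.1 + 1) θ)
    (lam : (j : ℕ) → EuclideanSpace ℝ (Fin m) →
      (EuclideanSpace ℝ (Fin (k (j + 1))) →L[ℝ] ℝ))
    (hlam_top : ∀ θ, lam (n - 1) θ =
      fderiv ℝ (fun v => f (Function.update (X θ) ⟨n - 1, by omega⟩ v))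
        (X θ ⟨n - 1, by omega⟩))
    (hlam_rec : ∀ θ (j : ℕ) (hj : j + 1 < n), lam j θ =
      fderiv ℝ (fun v => f (Function.update (X θ) ⟨j, by omega⟩ v)) (X θ ⟨j, by omega⟩)
      + (lam (j + 1) θ).comp
          ((fderiv ℝ (h (j + 1)) (x (j + 1) θ, θ)).comp
            (ContinuousLinearMap.inl ℝ _ _))) :
    ∀ θ, HasFDerivAt (fun θ' => f (X θ'))
      (∑ j : Fin n, (lam j.1 θ).comp
        ((fderiv ℝ (h j.1) (x j.1 θ, θ)).comp (ContinuousLinearMap.inr ℝ _ _))) θ := by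
  intro θ
  set D := stateTangent ℝ h x θ
  have hD := hasFDerivAt_stateTangent (θ := θ) hx0 hxs fun i => hh i _
  have hF := hasFDerivAt_comp_pi_of_partials (hf (X θ)) (D := fun j : Fin n => D (j.1 + 1))
    fun j => by simpa only [hX] using hD (j.1 + 1)
  let P : ∀ j : ℕ, EuclideanSpace ℝ (Fin (k (j + 1))) →L[ℝ] ℝ := fun j =>
    if hj : j < n then fderiv ℝ (fun v => f (Function.update (X θ) ⟨j, hj⟩ v)) (X θ ⟨j, hj⟩)
    else 0
  have hadj := sum_comp_tangent_eq_sum_adjoint_comp (n := n)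
    (fun i => fderiv ℝ (h i) (x i θ, θ) ∘L inl ℝ _ _)
    (fun i => fderiv ℝ (h i) (x i θ, θ) ∘L inr ℝ _ _) D rfl (fun _ => rfl) P (lam · θ)
    (by simp [P, hlam_top θ, (by omega : n - 1 < n)])
    fun j hj => by simp [P, hlam_rec θ j hj, (by omega : j < n)]
  refine hF.congr_fderiv ?_
  rw [Fin.sum_univ_eq_sum_range (fun j => lam j θ ∘L fderiv ℝ (h j) (x j θ, θ) ∘L inr ℝ _ _),
    ← hadj, ← Fin.sum_univ_eq_sum_range (fun j => P j ∘L D (j + 1))]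
  exact sum_congr rfl fun j _ => by simp [P, j.2]
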